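/- arXiv:2401.01995 — 6 statements merged into one kernel-verified Lean document; each statement's English description precedes it below -/
import Mathlib

section
/- For a single backer with expertness p ∈ [1/2, 1], when the true quality state is V = (1,0) (project 1 high-quality, project 2 low-quality), the probability that the backer pledges to project 1 equals a(p)·(1+a(p))/2 = (2p² − 2p + 1)(p² − p + 1), where a(p) = p² + (1−p)². -/
open Finset

/-- Probability of signal pair `s` given quality state `V` for a backer with expertness `p`:
signals are independent per project and correct with probability `p`
(`true` = high quality / high signal). -/
noncomputable def sigProb (p : ℝ) (V s : Bool × Bool) : ℝ :=
  (if s.1 = V.1 then p else 1 - p) * (if s.2 = V.2 then p else 1 - p)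

/-- Bayesian posterior over quality state `V` given own signals `s`, uniform prior. -/
noncomputable def post (p : ℝ) (s V : Bool × Bool) : ℝ :=
  sigProb p V s / ∑ V' : Bool × Bool, sigProb p V' s

/-- Probability of pledging to project 1 given own signals `s`. -/
noncomputable def pledge1 (p : ℝ) (s : Bool × Bool) : ℝ :=
  post p s (true, false) + (1/2) * post p s (true, true)

/-- Probability of pledging to project 2 given own signals `s`. -/
noncomputable def pledge2 (p : ℝ) (s : Bool × Bool) : ℝ :=
  post p s (false, true) + (1/2) * post p s (true, true)

/-- Probability of abstaining given own signals `s`. -/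
noncomputable def abstain (p : ℝ) (s : Bool × Bool) : ℝ :=
  post p s (false, false)

/-- Unconditional (on signals) probability of pledging to project 1 in state `V`. -/
noncomputable def condPledge1 (p : ℝ) (V : Bool × Bool) : ℝ :=
  ∑ s : Bool × Bool, sigProb p V s * pledge1 p s

/-- Unconditional probability of pledging to project 2 in state `V`. -/
noncomputable def condPledge2 (p : ℝ) (V : Bool × Bool) : ℝ :=
  ∑ s : Bool × Bool, sigProb p V s * pledge2 p s

/-- Unconditional probability of abstaining in state `V`. -/
noncomputable def condAbstain (p : ℝ) (V : Bool × Bool) : ℝ :=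
  ∑ s : Bool × Bool, sigProb p V s * abstain p s

/-- In state V = (1,0), a single backer with expertness p ∈ [1/2,1]
pledges to project 1 with probability a(p)(1+a(p))/2 = (2p²−2p+1)(p²−p+1),
where a(p) = p² + (1−p)². -/
theorem stmt0 (p : ℝ) (hp : 1/2 ≤ p) (hp1 : p ≤ 1) :
    condPledge1 p (true, false)
      = (p^2 + (1-p)^2) * (1 + (p^2 + (1-p)^2)) / 2 ∧
    condPledge1 p (true, false) = (2*p^2 - 2*p + 1) * (p^2 - p + 1) := by
  have hsum : ∀ s : Bool × Bool, (∑ V' : Bool × Bool, sigProb p V' s) = 1 := by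
    intro s
    simp only [sigProb, Fintype.sum_prod_type, Fintype.sum_bool]
    cases s.1 <;> cases s.2 <;> simp <;> ring
  constructor <;>
  · simp only [condPledge1, pledge1, post, hsum, div_one, Fintype.sum_prod_type,
      Fintype.sum_bool, sigProb]
    norm_num
    ring
end

section
/- For a single backer with expertness p ∈ [1/2, 1] and true quality state V = (1,0), the probability of pledging to the high-quality project 1 exceeds the probability of pledging to the low-quality project 2 by exactly (2p−1)². -/
open Finset

/-- In state V = (1,0), the probability of pledging to the high-quality
project 1 exceeds that of pledging to the low-quality project 2 by exactly (2p−1)². -/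
theorem stmt1 (p : ℝ) (hp : 1/2 ≤ p) (hp1 : p ≤ 1) :
    condPledge1 p (true, false) - condPledge2 p (true, false) = (2*p - 1)^2 := by
  have key : ∀ s : Bool × Bool, (∑ V' : Bool × Bool, sigProb p V' s) = 1 := by
    intro s
    rcases s with ⟨a,b⟩
    rcases a <;> rcases b <;> simp [sigProb, Fintype.sum_prod_type] <;> ring
  simp only [condPledge1, condPledge2, pledge1, pledge2, post, key, div_one,
    Fintype.sum_prod_type]
  simp [sigProb]
  ring
end

section
/- For any expertness p ∈ (1/2, 1), a single backer is strictly more likely to pledge to a high-quality project 1 when the competing project 2 is low-quality than when it is high-quality: P(pledge to 1 | V=(1,0)) = a(1+a)/2 > a(2−a)/2 = P(pledge to 1 | V=(1,1)), where a = p² + (1−p)². -/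
open Finset

lemma sumSig (p : ℝ) (s : Bool × Bool) : ∑ V' : Bool × Bool, sigProb p V' s = 1 := by
  simp [sigProb, Fintype.sum_prod_type]
  cases s.1 <;> cases s.2 <;> simp <;> ring

theorem stmt3' (p : ℝ) (hp : 1/2 < p) (hp1 : p < 1) :
    condPledge1 p (true, false) = (p^2 + (1-p)^2) * (1 + (p^2 + (1-p)^2)) / 2 ∧
    condPledge1 p (true, true) = (p^2 + (1-p)^2) * (2 - (p^2 + (1-p)^2)) / 2 ∧
    condPledge1 p (true, false) > condPledge1 p (true, true) := by
  have h : ∀ V s, post p s V = sigProb p V s := fun V s => by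
    simp [post, sumSig]
  have e1 : condPledge1 p (true, false) = (p^2 + (1-p)^2) * (1 + (p^2 + (1-p)^2)) / 2 := by
    simp [condPledge1, pledge1, h, sigProb, Fintype.sum_prod_type]; ring
  have e2 : condPledge1 p (true, true) = (p^2 + (1-p)^2) * (2 - (p^2 + (1-p)^2)) / 2 := by
    simp [condPledge1, pledge1, h, sigProb, Fintype.sum_prod_type]; ring
  refine ⟨e1, e2, ?_⟩
  rw [e1, e2]
  nlinarith [sq_nonneg (2*p-1), sq_nonneg p, sq_nonneg (1-p)]

/-- For p ∈ (1/2,1), a backer is strictly more likely to pledge to a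
high-quality project 1 when the competitor is low-quality than when it is high-quality:
P(pledge 1 | (1,0)) = a(1+a)/2 > a(2−a)/2 = P(pledge 1 | (1,1)), a = p²+(1−p)². -/
theorem stmt3 (p : ℝ) (hp : 1/2 < p) (hp1 : p < 1) :
    condPledge1 p (true, false) = (p^2 + (1-p)^2) * (1 + (p^2 + (1-p)^2)) / 2 ∧
    condPledge1 p (true, true) = (p^2 + (1-p)^2) * (2 - (p^2 + (1-p)^2)) / 2 ∧
    condPledge1 p (true, false) > condPledge1 p (true, true) :=
  stmt3' p hp hp1
end

section
/- Under a uniform prior, observing the first backer pledge to project 1 strictly lowers the posterior belief that the competing project 2 is high-quality: P(V²=1 | x₁=1) = (2 − a₁)/3 < 1/2 for any expertness p₁ ∈ (1/2, 1), where a₁ = p₁² + (1−p₁)². -/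
open Finset

/-- Posterior over quality state `V` given only that the first backer (expertness `p`)
pledged to project 1, under a uniform prior. -/
noncomputable def postObsPledge1 (p : ℝ) (V : Bool × Bool) : ℝ :=
  condPledge1 p V / ∑ V' : Bool × Bool, condPledge1 p V'

/-- Posterior over quality state `V` given only that the first backer abstained,
under a uniform prior. -/
noncomputable def postObsAbstain (p : ℝ) (V : Bool × Bool) : ℝ :=
  condAbstain p V / ∑ V' : Bool × Bool, condAbstain p V'

/-- observing a pledge to project 1 strictly lowers belief in project 2:
P(V² = 1 | x₁ = 1) = (2 − a₁)/3 < 1/2 for p₁ ∈ (1/2,1), a₁ = p₁² + (1−p₁)². -/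
theorem stmt6 (p : ℝ) (hp : 1/2 < p) (hp1 : p < 1) :
    postObsPledge1 p (true, true) + postObsPledge1 p (false, true)
      = (2 - (p^2 + (1-p)^2)) / 3 ∧
    postObsPledge1 p (true, true) + postObsPledge1 p (false, true) < 1/2 := by
  have hden : ∀ s : Bool × Bool, ∑ V' : Bool × Bool, sigProb p V' s = 1 := by
    rintro ⟨a, b⟩
    cases a <;> cases b <;>
      simp [sigProb, Fintype.sum_prod_type, Fintype.sum_bool] <;> ring
  have hpost : ∀ s V, post p s V = sigProb p V s := by
    intro s V; rw [post, hden s, div_one]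
  have hpl : ∀ s, pledge1 p s = sigProb p (true, false) s + (1/2) * sigProb p (true, true) s := by
    intro s; rw [pledge1, hpost, hpost]
  have hc : ∀ V : Bool × Bool, condPledge1 p V =
      ∑ s : Bool × Bool, sigProb p V s *
        (sigProb p (true, false) s + (1/2) * sigProb p (true, true) s) := by
    intro V; rw [condPledge1]; exact Finset.sum_congr rfl fun s _ => by rw [hpl]
  have h1 : condPledge1 p (true, true)
      = 2*p*(1-p)*(p^2+(1-p)^2) + (p^2+(1-p)^2)^2/2 := by
    rw [hc]; simp [sigProb, Fintype.sum_prod_type, Fintype.sum_bool]; ring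
  have h2 : condPledge1 p (true, false)
      = (p^2+(1-p)^2)^2 + p*(1-p)*(p^2+(1-p)^2) := by
    rw [hc]; simp [sigProb, Fintype.sum_prod_type, Fintype.sum_bool]; ring
  have h3 : condPledge1 p (false, true)
      = (2*p*(1-p))^2 + p*(1-p)*(p^2+(1-p)^2) := by
    rw [hc]; simp [sigProb, Fintype.sum_prod_type, Fintype.sum_bool]; ring
  have h4 : condPledge1 p (false, false)
      = 2*p*(1-p)*(p^2+(1-p)^2) + (2*p*(1-p))^2/2 := by
    rw [hc]; simp [sigProb, Fintype.sum_prod_type, Fintype.sum_bool]; ring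
  have hS : ∑ V' : Bool × Bool, condPledge1 p V' = 3/2 := by
    rw [Fintype.sum_prod_type]
    simp only [Fintype.sum_bool]
    rw [h1, h2, h3, h4]; ring
  have key : postObsPledge1 p (true, true) + postObsPledge1 p (false, true)
      = (2 - (p^2 + (1-p)^2)) / 3 := by
    rw [postObsPledge1, postObsPledge1, hS, h1, h3]; ring
  refine ⟨key, ?_⟩
  rw [key]
  nlinarith [sq_nonneg (2*p - 1), mul_pos (show (0:ℝ) < 2*p-1 by linarith) (show (0:ℝ) < 2*p-1 by linarith)]
end

section
/- Contrary-signal updating: if the second backer's own signals for both projects are low, i.e. s₂ = (L,L), then observing the first backer pledge to project 1 strictly raises the second backer's posterior belief that project 1 is high-quality above the level based on his own signals alone: P(V¹=1 | x₁=1, s₂=(L,L)) > 1 − p₂, for all p₁ ∈ (1/2, 1) and p₂ ∈ [1/2, 1). -/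
open Finset

/-- Second backer's posterior over state `V` given that the first backer (expertness `p1`)
pledged to project 1 and own signals `s` (expertness `p2`): ∝ P(x₁=1|V)·P(s|V). -/
noncomputable def postOL (p1 p2 : ℝ) (s V : Bool × Bool) : ℝ :=
  condPledge1 p1 V * sigProb p2 V s /
    ∑ V' : Bool × Bool, condPledge1 p1 V' * sigProb p2 V' s


/-! Both the first backer's pledge probability `w_V` and the second backer's signal likelihood
factor over the two projects, so project 2 integrates out of the second backer's posterior:
`P(V¹ = 1 | x₁ = 1, s₂ = (L,L)) = a₁(1 - p₂) / (a₁(1 - p₂) + (1 - a₁)p₂)`, which exceeds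
`1 - p₂` exactly when `a₁ > 1 - a₁`, i.e. when `p₁ ≠ 1/2`. -/

/-- `a₁` in the paper. -/
def agreeProb (p : ℝ) : ℝ := p ^ 2 + (1 - p) ^ 2

def signalLik (p : ℝ) (v s : Bool) : ℝ := if s = v then p else 1 - p

lemma sigProb_eq_mul (p : ℝ) (V s : Bool × Bool) :
    sigProb p V s = signalLik p V.1 s.1 * signalLik p V.2 s.2 := rfl

lemma sum_sigProb (p : ℝ) (s : Bool × Bool) : ∑ V : Bool × Bool, sigProb p V s = 1 := by
  obtain ⟨x, y⟩ := s
  cases x <;> cases y <;> simp only [sigProb, Fintype.sum_prod_type, Fintype.sum_bool, ↓reduceIte, Bool.false_eq_true, Bool.true_eq_false] <;> ring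

lemma post_eq_sigProb (p : ℝ) (s V : Bool × Bool) : post p s V = sigProb p V s := by
  rw [post, sum_sigProb, div_one]

lemma condPledge1_eq (p : ℝ) (V : Bool × Bool) :
    condPledge1 p V = (if V.1 then agreeProb p else 1 - agreeProb p) *
      ((if V.2 then 2 - agreeProb p else 1 + agreeProb p) / 2) := by
  obtain ⟨x, y⟩ := V
  cases x <;> cases y <;>
    simp only [condPledge1, pledge1, post_eq_sigProb, sigProb, agreeProb,
      Fintype.sum_prod_type, Fintype.sum_bool, ↓reduceIte, Bool.false_eq_true, Bool.true_eq_false] <;> ring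

lemma agreeProb_le_one {p : ℝ} (h0 : 0 ≤ p) (h1 : p ≤ 1) : agreeProb p ≤ 1 := by
  unfold agreeProb; nlinarith

lemma half_lt_agreeProb {p : ℝ} (h : p ≠ 1 / 2) : 1 / 2 < agreeProb p := by
  have : 0 < (p - 1 / 2) ^ 2 := by positivity
  unfold agreeProb; nlinarith

lemma fst_marginal_of_mul {ι κ : Type*} [Fintype ι] [Fintype κ] (α : ι → ℝ) (β : κ → ℝ)
    (hβ : ∑ j, β j ≠ 0) (i : ι) :
    (∑ j, α i * β j) / ∑ V : ι × κ, α V.1 * β V.2 = α i / ∑ i', α i' := by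
  rw [Fintype.sum_prod_type, ← Finset.mul_sum]
  simp_rw [← Finset.mul_sum]
  rw [← Finset.sum_mul, mul_div_mul_right _ _ hβ]

lemma postOL_fst_marginal {p1 p2 : ℝ} (hp1 : 0 ≤ p1) (hp1' : p1 ≤ 1) (hp2 : 0 ≤ p2)
    (hp2' : p2 ≤ 1) (s : Bool × Bool) :
    postOL p1 p2 s (true, true) + postOL p1 p2 s (true, false) =
      agreeProb p1 * signalLik p2 true s.1 /
        (agreeProb p1 * signalLik p2 true s.1 + (1 - agreeProb p1) * signalLik p2 false s.1) := by
  set a := agreeProb p1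
  let α : Bool → ℝ := fun x => (if x then a else 1 - a) * signalLik p2 x s.1
  let β : Bool → ℝ := fun y => (if y then 2 - a else 1 + a) / 2 * signalLik p2 y s.2
  have hw : ∀ V : Bool × Bool, condPledge1 p1 V * sigProb p2 V s = α V.1 * β V.2 := by
    intro V
    rw [condPledge1_eq, sigProb_eq_mul]
    ring
  have ha : a ≤ 1 := agreeProb_le_one hp1 hp1'
  have ha' : 0 ≤ a := by unfold a agreeProb; positivity
  have hβ : ∑ y, β y ≠ 0 := by
    cases hs : s.2 <;>
      simp only [Fintype.sum_bool, β, signalLik, hs, ↓reduceIte, Bool.false_eq_true,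
        Bool.true_eq_false] <;> nlinarith
  have key := fst_marginal_of_mul α β hβ true
  rw [Fintype.sum_bool] at key
  simp only [postOL, hw, ← add_div]
  rw [key]
  simp [α]

lemma one_sub_lt_posterior_of_half_lt {a p : ℝ} (ha : 1 / 2 < a) (ha' : a ≤ 1)
    (hp : 0 < p) (hp' : p < 1) :
    1 - p < a * (1 - p) / (a * (1 - p) + (1 - a) * p) := by
  have hD : 0 < a * (1 - p) + (1 - a) * p := by nlinarith
  have hgap : a * (1 - p) - (1 - p) * (a * (1 - p) + (1 - a) * p) = p * (1 - p) * (2 * a - 1) := by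
    ring
  have hpos : 0 < p * (1 - p) * (2 * a - 1) := by
    have : 0 < 1 - p := by linarith
    have : 0 < 2 * a - 1 := by linarith
    positivity
  rw [lt_div_iff₀ hD]
  linarith

/-- contrary-signal updating: with own signals s₂ = (L,L), observing the
first backer pledge to project 1 raises the belief that project 1 is high-quality
above 1 − p₂, for all p₁ ∈ (1/2,1), p₂ ∈ [1/2,1). -/
theorem stmt9 (p1 p2 : ℝ) (h1 : 1/2 < p1) (h1' : p1 < 1)
    (h2 : 1/2 ≤ p2) (h2' : p2 < 1) :
    postOL p1 p2 (false, false) (true, true)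
      + postOL p1 p2 (false, false) (true, false) > 1 - p2 := by
  rw [postOL_fst_marginal (by linarith) h1'.le (by linarith) h2'.le]
  have hsig : signalLik p2 true false = 1 - p2 ∧ signalLik p2 false false = p2 := by
    simp [signalLik]
  rw [hsig.1, hsig.2]
  exact one_sub_lt_posterior_of_half_lt (half_lt_agreeProb h1.ne')
    (agreeProb_le_one (by linarith) h1'.le) (by linarith) h2'
end

section
/- Herding with uninformative own signals: if the second backer's two signals agree (s₂ = (H,H) or s₂ = (L,L)), then after observing the first backer pledge to project 1, the second backer's probability of pledging to project 1 strictly exceeds his probability of pledging to project 2, for all p₁ ∈ (1/2, 1) and p₂ ∈ [1/2, 1). -/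
open Finset

lemma cp_closed (p : ℝ) (V : Bool × Bool) : condPledge1 p V =
    sigProb p V (true,true)*(sigProb p (true,false) (true,true)+1/2*sigProb p (true,true) (true,true))
  + sigProb p V (true,false)*(sigProb p (true,false) (true,false)+1/2*sigProb p (true,true) (true,false))
  + sigProb p V (false,true)*(sigProb p (true,false) (false,true)+1/2*sigProb p (true,true) (false,true))
  + sigProb p V (false,false)*(sigProb p (true,false) (false,false)+1/2*sigProb p (true,true) (false,false)) := by
  obtain ⟨a, b⟩ := V
  cases a <;> cases b <;>
    · simp [condPledge1, pledge1, post, sigProb, Fintype.sum_prod_type]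
      ring

lemma cp_nonneg (p : ℝ) (hp : 0 ≤ p) (hp' : p ≤ 1) (V : Bool × Bool) :
    0 ≤ condPledge1 p V := by
  obtain ⟨a, b⟩ := V
  cases a <;> cases b <;>
    · rw [cp_closed]
      simp [sigProb]
      nlinarith [sq_nonneg p, sq_nonneg (1-p), mul_nonneg hp (sub_nonneg.2 hp')]

lemma cp_diff (p : ℝ) (h : 1/2 < p) (h' : p < 1) :
    condPledge1 p (false, true) < condPledge1 p (true, false) := by
  rw [cp_closed, cp_closed]
  simp [sigProb]
  nlinarith [sq_nonneg (2*p-1), sq_nonneg p]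

/-- herding with uninformative own signals: if the second backer's two
signals agree, then after observing x₁ = 1 his probability of pledging to project 1
strictly exceeds his probability of pledging to project 2. -/
theorem stmt10 (p1 p2 : ℝ) (h1 : 1/2 < p1) (h1' : p1 < 1)
    (h2 : 1/2 ≤ p2) (h2' : p2 < 1) (s : Bool × Bool) (hs : s.1 = s.2) :
    postOL p1 p2 s (true, false) + (1/2) * postOL p1 p2 s (true, true)
      > postOL p1 p2 s (false, true) + (1/2) * postOL p1 p2 s (true, true) := by
  have hq : (0:ℝ) < p2 * (1 - p2) := by nlinarith
  have hAB := cp_diff p1 h1 h1'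
  have hApos : 0 < condPledge1 p1 (true, false) := by
    rw [cp_closed]; simp [sigProb]; nlinarith [sq_nonneg p1, sq_nonneg (1-p1)]
  have hnn := cp_nonneg p1 (by linarith) (by linarith)
  suffices h : postOL p1 p2 s (false, true) < postOL p1 p2 s (true, false) by linarith
  obtain ⟨a, b⟩ := s
  have hb : b = a := hs.symm
  subst hb
  unfold postOL
  have hsig : ∀ V : Bool × Bool, 0 ≤ sigProb p2 V (b, b) := by
    intro V; obtain ⟨c, d⟩ := V
    cases b <;> cases c <;> cases d <;> simp [sigProb] <;> nlinarith
  have hsigtf : sigProb p2 (true, false) (b, b) = p2 * (1 - p2) := by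
    cases b <;> simp [sigProb] <;> ring
  have hsigft : sigProb p2 (false, true) (b, b) = p2 * (1 - p2) := by
    cases b <;> simp [sigProb] <;> ring
  have hD : 0 < ∑ V' : Bool × Bool, condPledge1 p1 V' * sigProb p2 V' (b, b) := by
    rw [Fintype.sum_prod_type]
    have : 0 < condPledge1 p1 (true, false) * sigProb p2 (true, false) (b, b) := by
      rw [hsigtf]; positivity
    simp only [Fintype.sum_bool]
    nlinarith [mul_nonneg (hnn (false,false)) (hsig (false,false)),
      mul_nonneg (hnn (false,true)) (hsig (false,true)),
      mul_nonneg (hnn (true,true)) (hsig (true,true))]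
  rw [div_lt_div_iff₀ hD hD, hsigtf, hsigft]
  nlinarith [mul_pos hD hq]
end
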